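/- arXiv:1106.0088 — 2 statements merged into one kernel-verified Lean document; each statement's English description precedes it below -/
import Mathlib

section
/- Let X be a reflexive Banach space, let F ⊆ X be a closed, bounded, convex set with 0 in its interior, and let Q ⊆ X be a nonempty closed convex set. Then for every x ∈ X the generalized projection of x onto Q is nonempty: Q ∩ (x + T^F_Q(x)·F) ≠ ∅. -/
/-!
The sets `Q ∩ (x + tF)`, `t > T := T^F_Q(x)`, are nonempty, convex, closed and bounded, and
decrease as `t ↓ T`. In a reflexive space bounded closed convex sets are weakly compact (Mazur plus
Banach–Alaoglu in the bidual), so they have a common point `z`; since `F` is closed and bounded,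
`z - x ∈ tF` for all `t > T` forces `z - x ∈ TF`.
-/

open Set Metric Bornology Pointwise

/-- The minimal time function `T^F_Q(x) = inf {t ≥ 0 : Q ∩ (x + tF) ≠ ∅}`. -/
noncomputable def minTime {X : Type*} [NormedAddCommGroup X] [NormedSpace ℝ X]
    (F Q : Set X) (x : X) : ℝ :=
  sInf {t : ℝ | 0 ≤ t ∧ (Q ∩ ({x} + t • F)).Nonempty}

open Filter Topology

section WeakCompactness

open NormedSpace

theorem Convex.isClosed_toWeakSpace_image {E : Type*} [AddCommGroup E] [Module ℝ E]
    [TopologicalSpace E] [IsTopologicalAddGroup E] [ContinuousSMul ℝ E] [LocallyConvexSpace ℝ E]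
    {s : Set E} (hs : Convex ℝ s) (hc : IsClosed s) : IsClosed (toWeakSpace ℝ E '' s) := by
  rw [← hc.closure_eq, hs.toWeakSpace_closure ℝ]
  exact isClosed_closure

variable {X : Type*} [NormedAddCommGroup X] [NormedSpace ℝ X]

theorem isCompact_toWeakSpace_image_of_surjective_inclusionInDoubleDual
    (hrefl : Function.Surjective (inclusionInDoubleDual ℝ X))
    {s : Set X} (hs : Convex ℝ s) (hc : IsClosed s) (hb : IsBounded s) :
    IsCompact (toWeakSpace ℝ X '' s) := by
  have hrange : range (inclusionInDoubleDualWeak ℝ X) = univ :=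
    eq_univ_of_forall fun φ => (hrefl φ).imp fun z hz => hz
  have h := isCompact_closure_of_isBounded ℝ X (toWeakSpace ℝ X '' s)
    (by rwa [preimage_image_eq s (toWeakSpace ℝ X).injective]) (hrange ▸ subset_univ _)
  rwa [(hs.isClosed_toWeakSpace_image hc).closure_eq] at h

theorem nonempty_iInter_of_surjective_inclusionInDoubleDual
    (hrefl : Function.Surjective (inclusionInDoubleDual ℝ X))
    {ι : Type*} [Nonempty ι] {S : ι → Set X} (hdir : Directed (· ⊇ ·) S)
    (hne : ∀ i, (S i).Nonempty) (hconv : ∀ i, Convex ℝ (S i)) (hc : ∀ i, IsClosed (S i))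
    (hb : ∀ i, IsBounded (S i)) :
    (⋂ i, S i).Nonempty := by
  have hweak := IsCompact.nonempty_iInter_of_directed_nonempty_isCompact_isClosed
    (fun i => toWeakSpace ℝ X '' S i)
    (hdir.mono_comp (g := image (toWeakSpace ℝ X)) _ fun _ _ => image_mono)
    (fun i => (hne i).image _)
    (fun i => isCompact_toWeakSpace_image_of_surjective_inclusionInDoubleDual hrefl
      (hconv i) (hc i) (hb i))
    fun i => (hconv i).isClosed_toWeakSpace_image (hc i)
  rwa [← image_iInter (toWeakSpace ℝ X).bijective, image_nonempty] at hweak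

end WeakCompactness

theorem mem_singleton_add_iff_sub_mem {G : Type*} [AddCommGroup G] {s : Set G} {x z : G} :
    z ∈ {x} + s ↔ z - x ∈ s := by
  simp [singleton_add, neg_add_eq_sub]

theorem StarConvex.smul_subset_smul {𝕜 E : Type*} [Field 𝕜] [LinearOrder 𝕜]
    [IsStrictOrderedRing 𝕜] [AddCommGroup E] [Module 𝕜 E] {F : Set E} (hF : StarConvex 𝕜 0 F)
    {s t : 𝕜} (hs : 0 ≤ s) (hst : s ≤ t) : s • F ⊆ t • F := by
  rcases hst.eq_or_lt with rfl | hst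
  · rfl
  rintro - ⟨f, hf, rfl⟩
  have ht : 0 < t := hs.trans_lt hst
  refine ⟨(s / t) • f, hF.smul_mem hf (by positivity) ((div_le_one ht).2 hst.le), ?_⟩
  simp only [smul_smul, mul_div_cancel₀ _ ht.ne']

section MinimalTime

variable {X : Type*} [NormedAddCommGroup X] [NormedSpace ℝ X]

theorem minTime_nonneg (F Q : Set X) (x : X) : 0 ≤ minTime F Q x :=
  Real.sInf_nonneg fun _ ht => ht.1

theorem nonempty_inter_singleton_add_smul_of_minTime_lt {F Q : Set X} (hFconv : Convex ℝ F)
    (hF0 : (0 : X) ∈ interior F) (hQne : Q.Nonempty) {x : X} {t : ℝ} (ht : minTime F Q x < t) :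
    (Q ∩ ({x} + t • F)).Nonempty := by
  obtain ⟨q, hq⟩ := hQne
  obtain ⟨r, hr, hqr⟩ := (absorbent_nhds_zero (𝕜 := ℝ) (mem_interior_iff_mem_nhds.1 hF0))
    |>.gauge_set_nonempty (x := q - x)
  have hA : {t : ℝ | 0 ≤ t ∧ (Q ∩ ({x} + t • F)).Nonempty}.Nonempty :=
    ⟨r, hr.le, q, hq, mem_singleton_add_iff_sub_mem.2 hqr⟩
  obtain ⟨s, ⟨hs, z, hzQ, hzF⟩, hst⟩ := exists_lt_of_csInf_lt hA ht
  refine ⟨z, hzQ, ?_⟩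
  rw [mem_singleton_add_iff_sub_mem] at hzF ⊢
  exact (hFconv.starConvex (interior_subset hF0)).smul_subset_smul hs hst.le hzF

end MinimalTime

theorem IsClosed.mem_smul_of_forall_lt {E : Type*} [NormedAddCommGroup E] [NormedSpace ℝ E]
    {F : Set E} (hFc : IsClosed F) (hFb : IsBounded F) (hF : F.Nonempty) {T : ℝ} (hT : 0 ≤ T)
    {z : E} (hz : ∀ t, T < t → z ∈ t • F) : z ∈ T • F := by
  rcases hT.eq_or_lt with rfl | hT
  · obtain ⟨R, hR⟩ := hFb.exists_norm_le
    have hle : ∀ t, 0 < t → ‖z‖ ≤ t * R := by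
      intro t ht
      obtain ⟨f, hf, rfl⟩ := hz t ht
      rw [norm_smul, Real.norm_of_nonneg ht.le]
      exact mul_le_mul_of_nonneg_left (hR f hf) ht.le
    have hlim : Tendsto (fun t => t * R) (𝓝[>] 0) (𝓝 0) :=
      tendsto_nhdsWithin_of_tendsto_nhds (by simpa using (continuous_mul_const R).tendsto 0)
    have hz0 : ‖z‖ ≤ 0 := ge_of_tendsto hlim (eventually_nhdsWithin_of_forall hle)
    rw [norm_le_zero_iff.1 hz0, zero_smul_set hF]
    exact Set.zero_mem_zero
  · have hlim : Tendsto (fun t : ℝ => t⁻¹ • z) (𝓝[>] T) (𝓝 (T⁻¹ • z)) :=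
      tendsto_nhdsWithin_of_tendsto_nhds ((tendsto_inv₀ hT.ne').smul_const z)
    have hmem : ∀ t, T < t → t⁻¹ • z ∈ F := fun t ht =>
      (mem_smul_set_iff_inv_smul_mem₀ (hT.trans ht).ne' _ _).1 (hz t ht)
    exact (mem_smul_set_iff_inv_smul_mem₀ hT.ne' _ _).2
      (hFc.mem_of_tendsto hlim (eventually_nhdsWithin_of_forall hmem))

theorem generalizedProjection_nonempty_of_reflexive_general
    {X : Type*} [NormedAddCommGroup X] [NormedSpace ℝ X]
    (hrefl : Function.Surjective (NormedSpace.inclusionInDoubleDual ℝ X))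
    (F : Set X) (hFc : IsClosed F) (hFb : IsBounded F) (hFconv : Convex ℝ F)
    (hF0 : (0 : X) ∈ interior F)
    (Q : Set X) (hQne : Q.Nonempty) (hQc : IsClosed Q) (hQconv : Convex ℝ Q) (x : X) :
    (Q ∩ ({x} + minTime F Q x • F)).Nonempty := by
  set T := minTime F Q x
  have hT : 0 ≤ T := minTime_nonneg F Q x
  have hFstar : StarConvex ℝ 0 F := hFconv.starConvex (interior_subset hF0)
  let S (t : Ioi T) : Set X := Q ∩ ({x} + (t : ℝ) • F)
  have hdir : Directed (· ⊇ ·) S := Monotone.directed_ge fun s t hst =>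
    inter_subset_inter_right Q <|
      add_subset_add_left (hFstar.smul_subset_smul (hT.trans s.2.le) hst)
  have hSc (t : Ioi T) : IsClosed (S t) := hQc.inter <| by
    rw [singleton_add]; exact (hFc.smul_of_ne_zero (hT.trans_lt t.2).ne').vadd x
  obtain ⟨z, hz⟩ := nonempty_iInter_of_surjective_inclusionInDoubleDual hrefl hdir
    (fun t => nonempty_inter_singleton_add_smul_of_minTime_lt hFconv hF0 hQne t.2)
    (fun t => hQconv.inter ((convex_singleton x).add (hFconv.smul _))) hSc
    (fun t => (isBounded_singleton.add (hFb.smul₀ _)).subset inter_subset_right)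
  have hzS (t : ℝ) (ht : T < t) : z ∈ S ⟨t, ht⟩ := mem_iInter.1 hz ⟨t, ht⟩
  refine ⟨z, (hzS (T + 1) (lt_add_one T)).1, mem_singleton_add_iff_sub_mem.2 ?_⟩
  exact hFc.mem_smul_of_forall_lt hFb ⟨0, interior_subset hF0⟩ hT fun t ht =>
    mem_singleton_add_iff_sub_mem.1 (hzS t ht).2

/-- In a reflexive Banach space, the generalized projection
`Π^F_Q(x) = Q ∩ (x + T^F_Q(x)·F)` onto a nonempty closed convex set `Q` is nonempty. -/
theorem generalizedProjection_nonempty_of_reflexive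
    {X : Type*} [NormedAddCommGroup X] [NormedSpace ℝ X] [CompleteSpace X]
    (hrefl : Function.Surjective (NormedSpace.inclusionInDoubleDual ℝ X))
    (F : Set X) (hFc : IsClosed F) (hFb : IsBounded F) (hFconv : Convex ℝ F)
    (hF0 : (0 : X) ∈ interior F)
    (Q : Set X) (hQne : Q.Nonempty) (hQc : IsClosed Q) (hQconv : Convex ℝ Q) (x : X) :
    (Q ∩ ({x} + minTime F Q x • F)).Nonempty :=
  generalizedProjection_nonempty_of_reflexive_general hrefl F hFc hFb hFconv hF0 Q hQne hQc hQconv x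
end

section
/- Let X be a real Hilbert space and let Ω, Ω_1, …, Ω_n (n ≥ 2) be nonempty closed subsets of X with Ω ∩ Ω_i = ∅ for all i. Let x̄ ∈ Ω be a local optimal solution of the distance version of the generalized Heron problem with Π(x̄;Ω_i) ≠ ∅ for all i, and suppose that Ω admits a tangent space at x̄, i.e., there is a linear subspace L of X with L^⊥ = N̂(x̄;Ω). Then for every choice of projections ω_i ∈ Π(x̄;Ω_i) the unit vectors a_i := (x̄ − ω_i)/d(x̄;Ω_i) satisfy Σ_{i=1}^n cos(a_i, v) = 0 for every v ∈ L \ {0}. -/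
/-!
Each `d(·; Ωᵢ)` lies below `‖· - ωᵢ‖`, with equality at `x̄`, and `x̄ ≠ ωᵢ` because `Ω` and `Ωᵢ`
are disjoint; so the unit vector `aᵢ`, the gradient of `‖· - ωᵢ‖` at `x̄`, is a Fréchet upper
gradient of `d(·; Ωᵢ)` at `x̄`, and `Σ aᵢ` is one of the objective. At a local minimiser on `Ω`
this forces `-Σ aᵢ ∈ N̂(x̄; Ω) = L^⊥`, and as `‖aᵢ‖ = 1`,
`Σ cos(aᵢ, v) = ⟪Σ aᵢ, v⟫ / ‖v‖ = 0`.
-/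

open Set Metric
open scoped RealInnerProductSpace

/-- The set of metric projections of `x` onto `Q`. -/
def projSet {X : Type*} [NormedAddCommGroup X] (Q : Set X) (x : X) : Set X :=
  {ω ∈ Q | ‖x - ω‖ = infDist x Q}

/-- The Fréchet (regular) normal cone to `Ω` at `x̄ ∈ Ω`. -/
def frechetNormalCone {X : Type*} [NormedAddCommGroup X] [InnerProductSpace ℝ X]
    (Ω : Set X) (xbar : X) : Set X :=
  {v | ∀ ε > (0 : ℝ), ∃ δ > (0 : ℝ), ∀ x ∈ Ω, ‖x - xbar‖ < δ →
    ⟪v, x - xbar⟫ ≤ ε * ‖x - xbar‖}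

/-- `cos(u,v) = ⟨u,v⟩/(‖u‖·‖v‖)` for nonzero vectors. -/
noncomputable def rcos {X : Type*} [NormedAddCommGroup X] [InnerProductSpace ℝ X]
    (u v : X) : ℝ :=
  ⟪u, v⟫ / (‖u‖ * ‖v‖)

open Filter Topology

theorem ne_of_mem_projSet {X : Type*} [NormedAddCommGroup X] {Q : Set X} {x ω : X}
    (hω : ω ∈ projSet Q x) (hx : x ∉ Q) : x ≠ ω := by
  rintro rfl
  exact hx hω.1

section UpperGradient

variable {X : Type*} [NormedAddCommGroup X] [InnerProductSpace ℝ X]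

/-- `g` is a Fréchet upper gradient of `f` at `x`: `f y ≤ f x + ⟪g, y - x⟫ + o(‖y - x‖)`. -/
def HasUpperGradientAt (f : X → ℝ) (g x : X) : Prop :=
  ∀ ε > 0, ∀ᶠ y in 𝓝 x, f y - f x ≤ ⟪g, y - x⟫ + ε * ‖y - x‖

theorem hasUpperGradientAt_const (c : ℝ) (x : X) : HasUpperGradientAt (fun _ => c) 0 x :=
  fun ε hε => Eventually.of_forall fun y => by
    simp only [sub_self, inner_zero_left, zero_add]
    positivity

theorem HasUpperGradientAt.add {f₁ f₂ : X → ℝ} {g₁ g₂ x : X} (h₁ : HasUpperGradientAt f₁ g₁ x)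
    (h₂ : HasUpperGradientAt f₂ g₂ x) : HasUpperGradientAt (fun y => f₁ y + f₂ y) (g₁ + g₂) x := by
  intro ε hε
  filter_upwards [h₁ (ε / 2) (half_pos hε), h₂ (ε / 2) (half_pos hε)] with y hy₁ hy₂
  rw [inner_add_left]
  linarith

theorem HasUpperGradientAt.sum {ι : Type*} {s : Finset ι} {f : ι → X → ℝ} {g : ι → X} {x : X}
    (h : ∀ i ∈ s, HasUpperGradientAt (f i) (g i) x) :
    HasUpperGradientAt (fun y => ∑ i ∈ s, f i y) (∑ i ∈ s, g i) x := by
  classical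
  induction s using Finset.induction_on with
  | empty => simpa using hasUpperGradientAt_const (0 : ℝ) x
  | insert i s hi ih =>
    simp only [Finset.sum_insert hi]
    exact (h i (s.mem_insert_self i)).add (ih fun j hj => h j (Finset.mem_insert_of_mem hj))

theorem HasUpperGradientAt.of_le {f h : X → ℝ} {g x : X} (hh : HasUpperGradientAt h g x)
    (hle : ∀ y, f y ≤ h y) (hx : f x = h x) : HasUpperGradientAt f g x := fun ε hε =>
  (hh ε hε).mono fun y hy => by linarith [hle y]

theorem norm_mul_sub_le_inner_add (a h : X) :
    ‖a‖ * (‖a + h‖ - ‖a‖) ≤ ⟪a, h⟫ + ‖h‖ ^ 2 / 2 := by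
  nlinarith [norm_add_sq_real a h, sq_nonneg (‖a + h‖ - ‖a‖)]

theorem hasUpperGradientAt_norm_sub {x ω : X} (hx : x ≠ ω) :
    HasUpperGradientAt (fun y => ‖y - ω‖) (‖x - ω‖⁻¹ • (x - ω)) x := by
  intro ε hε
  have hr : 0 < ‖x - ω‖ := norm_pos_iff.2 (sub_ne_zero.2 hx)
  filter_upwards [ball_mem_nhds x (by positivity : 0 < 2 * ε * ‖x - ω‖)] with y hy
  rw [mem_ball, dist_eq_norm] at hy
  have key := norm_mul_sub_le_inner_add (x - ω) (y - x)
  rw [sub_add_sub_cancel'] at key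
  have hquad : ‖y - x‖ ^ 2 / 2 ≤ ε * ‖x - ω‖ * ‖y - x‖ := by nlinarith [norm_nonneg (y - x)]
  rw [real_inner_smul_left, ← sub_le_iff_le_add, le_inv_mul_iff₀ hr]
  linarith

theorem norm_inv_infDist_smul_sub_of_mem_projSet {Q : Set X} {x ω : X} (hω : ω ∈ projSet Q x)
    (hx : x ∉ Q) : ‖(infDist x Q)⁻¹ • (x - ω)‖ = 1 := by
  have hr : ‖x - ω‖ ≠ 0 := norm_ne_zero_iff.2 (sub_ne_zero.2 (ne_of_mem_projSet hω hx))
  rw [← hω.2, norm_smul, norm_inv, norm_norm, inv_mul_cancel₀ hr]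

theorem hasUpperGradientAt_infDist_of_mem_projSet {Q : Set X} {x ω : X} (hω : ω ∈ projSet Q x)
    (hx : x ∉ Q) : HasUpperGradientAt (infDist · Q) ((infDist x Q)⁻¹ • (x - ω)) x := by
  rw [← hω.2]
  refine (hasUpperGradientAt_norm_sub (ne_of_mem_projSet hω hx)).of_le (fun y => ?_) hω.2.symm
  simpa only [dist_eq_norm] using infDist_le_dist_of_mem hω.1

theorem IsLocalMinOn.neg_mem_frechetNormalCone {f : X → ℝ} {Ω : Set X} {g x : X}
    (hmin : IsLocalMinOn f Ω x) (hg : HasUpperGradientAt f g x) :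
    -g ∈ frechetNormalCone Ω x := by
  intro ε hε
  have hev : ∀ᶠ y in 𝓝[Ω] x, ⟪-g, y - x⟫ ≤ ε * ‖y - x‖ := by
    filter_upwards [hmin, nhdsWithin_le_nhds (hg ε hε)] with y hmin_y hg_y
    rw [inner_neg_left]
    linarith
  obtain ⟨δ, hδ, hball⟩ := Metric.mem_nhdsWithin_iff.1 hev
  exact ⟨δ, hδ, fun y hy hyδ => hball ⟨by rwa [mem_ball, dist_eq_norm], hy⟩⟩

theorem rcos_of_norm_eq_one {u : X} (hu : ‖u‖ = 1) (v : X) : rcos u v = ⟪u, v⟫ / ‖v‖ := by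
  rw [rcos, hu, one_mul]

end UpperGradient

theorem heron_tangent_space_necessary_general
    {X : Type*} [NormedAddCommGroup X] [InnerProductSpace ℝ X]
    (n : ℕ)
    (Ω : Set X)
    (Ωi : Fin n → Set X)
    (hdisj : ∀ i, Ω ∩ Ωi i = ∅)
    (xbar : X) (hxbar : xbar ∈ Ω)
    (hloc : ∃ δ > (0 : ℝ), ∀ x ∈ Ω, ‖x - xbar‖ < δ →
      ∑ i, infDist xbar (Ωi i) ≤ ∑ i, infDist x (Ωi i))
    (L : Submodule ℝ X)
    (hL : {v : X | ∀ u ∈ L, ⟪v, u⟫ = 0} = frechetNormalCone Ω xbar)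
    (ω : Fin n → X) (hω : ∀ i, ω i ∈ projSet (Ωi i) xbar) :
    ∀ v ∈ L, v ≠ 0 →
      ∑ i, rcos ((infDist xbar (Ωi i))⁻¹ • (xbar - ω i)) v = 0 := by
  intro v hv _
  have hxbar_notMem : ∀ i, xbar ∉ Ωi i := fun i hi => (hdisj i).subset ⟨hxbar, hi⟩
  have hmin : IsLocalMinOn (fun x => ∑ i, infDist x (Ωi i)) Ω xbar := by
    obtain ⟨δ, hδ, hopt⟩ := hloc
    filter_upwards [inter_mem_nhdsWithin Ω (ball_mem_nhds xbar hδ)] with x ⟨hxΩ, hxδ⟩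
    exact hopt x hxΩ (by rwa [mem_ball, dist_eq_norm] at hxδ)
  have hnormal := hmin.neg_mem_frechetNormalCone <| HasUpperGradientAt.sum fun i _ =>
    hasUpperGradientAt_infDist_of_mem_projSet (hω i) (hxbar_notMem i)
  rw [← hL] at hnormal
  have horth := hnormal v hv
  rw [inner_neg_left, neg_eq_zero, sum_inner] at horth
  simp_rw [rcos_of_norm_eq_one (norm_inv_infDist_smul_sub_of_mem_projSet (hω _) (hxbar_notMem _)),
    ← Finset.sum_div, horth, zero_div]

/-- Necessary optimality condition for the generalized Heron problem in a Hilbert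
space when the constraint set `Ω` admits a tangent space `L` at the local solution
`x̄` (i.e. `L^⊥ = N̂(x̄;Ω)`): `Σᵢ cos(aᵢ, v) = 0` for every nonzero `v ∈ L`, where
`aᵢ = (x̄ − ωᵢ)/d(x̄;Ωᵢ)` for arbitrary projections `ωᵢ ∈ Π(x̄;Ωᵢ)`. -/
theorem heron_tangent_space_necessary
    {X : Type*} [NormedAddCommGroup X] [InnerProductSpace ℝ X] [CompleteSpace X]
    (n : ℕ) (hn : 2 ≤ n)
    (Ω : Set X) (hΩne : Ω.Nonempty) (hΩc : IsClosed Ω)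
    (Ωi : Fin n → Set X) (hΩine : ∀ i, (Ωi i).Nonempty) (hΩic : ∀ i, IsClosed (Ωi i))
    (hdisj : ∀ i, Ω ∩ Ωi i = ∅)
    (xbar : X) (hxbar : xbar ∈ Ω)
    (hloc : ∃ δ > (0 : ℝ), ∀ x ∈ Ω, ‖x - xbar‖ < δ →
      ∑ i, infDist xbar (Ωi i) ≤ ∑ i, infDist x (Ωi i))
    (hproj : ∀ i, (projSet (Ωi i) xbar).Nonempty)
    (L : Submodule ℝ X)
    (hL : {v : X | ∀ u ∈ L, ⟪v, u⟫ = 0} = frechetNormalCone Ω xbar)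
    (ω : Fin n → X) (hω : ∀ i, ω i ∈ projSet (Ωi i) xbar) :
    ∀ v ∈ L, v ≠ 0 →
      ∑ i, rcos ((infDist xbar (Ωi i))⁻¹ • (xbar - ω i)) v = 0 :=
  heron_tangent_space_necessary_general n Ω Ωi hdisj xbar hxbar hloc L hL ω hω
end
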